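/- arXiv:2404.12082 — 2 statements merged into one kernel-verified Lean document; each statement's English description precedes it below -/
import Mathlib

section
/- Let G be a finite graph that is K_3-free, (K_1+2K_2)-free, and (K_1+C_5)-free, and let I be a maximal independent set of G. Then every induced 5-cycle of G intersects I. -/
/-!
Suppose an induced 5-cycle `f 0, …, f 4` misses `I`. By maximality each `f i` has a neighbour
`n i ∈ I`, and triangle-freeness leaves `n i` adjacent, on the cycle, to `f i` and to at most one
of the opposite vertices `f (i + 2)`, `f (i + 3)`. If neither `n i ~ f (i + 2)` nor
`n (i + 2) ~ f i`, then `n (i + 1)` together with the edges `n i f i` and `n (i + 2) f (i + 2)`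
induces `K₁ + 2K₂`. Propagating this dichotomy around the cycle, there is `k ∈ {2, 3}` with
`n i ~ f (i + k)` for every `i`; but then the vertex `n 0` and the edges `n (-k) f (-k)`,
`n (2k) f (-2k)` again induce `K₁ + 2K₂`.
-/

/-- The 5-cycle `C₅`. -/
def C5 : SimpleGraph (ZMod 5) :=
  SimpleGraph.fromRel (fun i j => j = i + 1)

/-- The graph `K₁ + 2K₂`: vertex 0 is isolated, with edges 1-2 and 3-4. -/
def K1plus2K2 : SimpleGraph (Fin 5) :=
  SimpleGraph.fromRel (fun i j => (i = 1 ∧ j = 2) ∨ (i = 3 ∧ j = 4))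

/-- The graph `K₁ + C₅`: vertex 0 is isolated and 1,2,3,4,5 form a 5-cycle. -/
def K1plusC5 : SimpleGraph (Fin 6) :=
  SimpleGraph.fromRel (fun i j =>
    (i = 1 ∧ j = 2) ∨ (i = 2 ∧ j = 3) ∨ (i = 3 ∧ j = 4) ∨ (i = 4 ∧ j = 5) ∨ (i = 5 ∧ j = 1))

/-- `I` is an independent set of vertices of `G`. -/
def IsIndep {V : Type*} (G : SimpleGraph V) (I : Set V) : Prop :=
  ∀ x ∈ I, ∀ y ∈ I, ¬ G.Adj x y

section

open SimpleGraph

variable {V : Type*} {G : SimpleGraph V}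

lemma SimpleGraph.CliqueFree.not_adj_of_adj_of_adj (h : G.CliqueFree 3) {u v w : V}
    (huv : G.Adj u v) (huw : G.Adj u w) : ¬ G.Adj v w := fun hvw =>
  isIndepSet_neighborSet_of_triangleFree G h u huv huw hvw.ne hvw

lemma IsIndep.exists_adj_of_maximal {I : Set V} (hI : IsIndep G I)
    (hmax : ∀ J : Set V, IsIndep G J → I ⊆ J → J = I) {v : V} (hv : v ∉ I) :
    ∃ x ∈ I, G.Adj x v := by
  by_contra! hno
  have hJ : IsIndep G (insert v I) := by
    rintro x (rfl | hx) y (rfl | hy)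
    · exact G.irrefl
    · exact fun h => hno y hy h.symm
    · exact hno x hx
    · exact hI x hx y hy
  exact hv (hmax _ hJ (Set.subset_insert v I) ▸ Set.mem_insert v I)

lemma ZMod.forall_of_imp_add {p : ℕ} (hp : p.Prime) {P : ZMod p → Prop} {k : ZMod p}
    (hk : k ≠ 0) (hP : ∀ i, P i → P (i + k)) {i : ZMod p} (hi : P i) (j : ZMod p) : P j := by
  have : Fact p.Prime := ⟨hp⟩
  have key : ∀ m : ℕ, P (i + m * k) := by
    intro m
    induction m with
    | zero => simpa using hi
    | succ m ih => simpa [add_mul, add_assoc] using hP _ ih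
  simpa [inv_mul_cancel_right₀ hk] using key ((j - i) * k⁻¹).val

lemma C5_adj {i j : ZMod 5} : C5.Adj i j ↔ j = i + 1 ∨ i = j + 1 := by
  rw [C5, fromRel_adj]
  revert i j
  decide

lemma C5_not_adj_add_two (i : ZMod 5) : ¬ C5.Adj i (i + 2) := by
  rw [C5_adj]
  revert i
  decide

lemma C5_eq_or_of_not_adj {i j : ZMod 5} (h : ¬ C5.Adj i j) :
    j = i ∨ j = i + 2 ∨ j = i + 3 := by
  rw [C5_adj] at h
  revert i j
  decide

lemma nonempty_K1plus2K2_embedding {d a p b q : V} (hap : G.Adj a p) (hbq : G.Adj b q)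
    (hda : ¬ G.Adj d a) (hdp : ¬ G.Adj d p) (hdb : ¬ G.Adj d b) (hdq : ¬ G.Adj d q)
    (hab : ¬ G.Adj a b) (haq : ¬ G.Adj a q) (hpb : ¬ G.Adj p b) (hpq : ¬ G.Adj p q) :
    Nonempty (K1plus2K2 ↪g G) := by
  refine ⟨⟨⟨![d, a, p, b, q], ?_⟩, ?_⟩⟩
  · -- the five vertices are distinct because their adjacency patterns differ
    intro i j hij
    fin_cases i <;> fin_cases j <;> first | rfl | simp_all [G.adj_comm]
  · intro i j
    change G.Adj (![d, a, p, b, q] i) (![d, a, p, b, q] j) ↔ _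
    fin_cases i <;> fin_cases j <;>
      simp_all [K1plus2K2, fromRel_adj, G.adj_comm]

section InducedC5

variable (f : C5 ↪g G) {n : ZMod 5 → V}

lemma not_adj_of_C5_adj (hK3 : G.CliqueFree 3) (hn : ∀ i, G.Adj (n i) (f i)) {i j : ZMod 5}
    (hij : C5.Adj i j) : ¬ G.Adj (n i) (f j) :=
  hK3.not_adj_of_adj_of_adj (hn i).symm (f.map_adj_iff.mpr hij)

lemma eq_or_eq_add_two_or_eq_add_three_of_adj (hK3 : G.CliqueFree 3)
    (hn : ∀ i, G.Adj (n i) (f i)) {i j : ZMod 5} (h : G.Adj (n i) (f j)) :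
    j = i ∨ j = i + 2 ∨ j = i + 3 :=
  C5_eq_or_of_not_adj fun hij => not_adj_of_C5_adj f hK3 hn hij h

lemma not_adj_add_two_and_add_three (hK3 : G.CliqueFree 3) (i : ZMod 5) :
    ¬ (G.Adj (n i) (f (i + 2)) ∧ G.Adj (n i) (f (i + 3))) := fun ⟨h2, h3⟩ =>
  hK3.not_adj_of_adj_of_adj h2 h3 (f.map_adj_iff.mpr (C5_adj.mpr (Or.inl (by ring))))

lemma adj_add_two_or_adj_add_two (hK3 : G.CliqueFree 3) (hK : ¬ Nonempty (K1plus2K2 ↪g G))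
    (hn : ∀ i, G.Adj (n i) (f i)) (hnn : ∀ i j, ¬ G.Adj (n i) (n j)) (i : ZMod 5) :
    G.Adj (n i) (f (i + 2)) ∨ G.Adj (n (i + 2)) (f i) := by
  by_contra! h
  refine hK (nonempty_K1plus2K2_embedding (d := n (i + 1)) (hn i) (hn (i + 2)) (hnn _ _)
    (not_adj_of_C5_adj f hK3 hn (C5_adj.mpr (Or.inr rfl))) (hnn _ _)
    (not_adj_of_C5_adj f hK3 hn (C5_adj.mpr (Or.inl (by ring)))) (hnn _ _) h.1
    (fun h' => h.2 h'.symm) (f.map_adj_iff.not.mpr (C5_not_adj_add_two i)))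

lemma exists_forall_adj_add (hK3 : G.CliqueFree 3) (hK : ¬ Nonempty (K1plus2K2 ↪g G))
    (hn : ∀ i, G.Adj (n i) (f i)) (hnn : ∀ i j, ¬ G.Adj (n i) (n j)) :
    ∃ k : ZMod 5, (k = 2 ∨ k = 3) ∧ ∀ i, G.Adj (n i) (f (i + k)) := by
  have hD := adj_add_two_or_adj_add_two f hK3 hK hn hnn
  have h5 : ∀ i : ZMod 5, i + 3 + 2 = i := by decide
  by_cases hx : ∃ i, G.Adj (n i) (f (i + 2))
  · obtain ⟨i, hi⟩ := hx
    refine ⟨2, Or.inl rfl,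
      ZMod.forall_of_imp_add Nat.prime_five (k := 3) (by decide) (fun i hi => ?_) hi⟩
    -- `n i ~ f (i + 2)` excludes `n i ~ f (i + 3)`, the second alternative at `i + 3`
    refine (hD (i + 3)).resolve_right fun h => not_adj_add_two_and_add_three f hK3 i ⟨hi, ?_⟩
    rwa [h5] at h
  · push Not at hx
    refine ⟨3, Or.inr rfl, fun i => ?_⟩
    simpa [h5] using (hD (i + 3)).resolve_left (hx _)

lemma adj_iff_of_forall_adj_add (hK3 : G.CliqueFree 3) (hn : ∀ i, G.Adj (n i) (f i))
    {k : ZMod 5} (hk : k = 2 ∨ k = 3) (hall : ∀ i, G.Adj (n i) (f (i + k))) (i j : ZMod 5) :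
    G.Adj (n i) (f j) ↔ j = i ∨ j = i + k := by
  refine ⟨fun h => ?_, by rintro (rfl | rfl); exacts [hn j, hall i]⟩
  have hE := not_adj_add_two_and_add_three (n := n) f hK3 i
  rcases eq_or_eq_add_two_or_eq_add_three_of_adj f hK3 hn h with rfl | rfl | rfl <;>
    rcases hk with rfl | rfl <;> simp_all

lemma nonempty_K1plus2K2_embedding_of_forall_adj_add (hK3 : G.CliqueFree 3)
    (hn : ∀ i, G.Adj (n i) (f i)) (hnn : ∀ i j, ¬ G.Adj (n i) (n j)) {k : ZMod 5}
    (hk : k = 2 ∨ k = 3) (hall : ∀ i, G.Adj (n i) (f (i + k))) :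
    Nonempty (K1plus2K2 ↪g G) := by
  have hN := adj_iff_of_forall_adj_add f hK3 hn hk hall
  have hC (i j : ZMod 5) : G.Adj (f i) (f j) ↔ j = i + 1 ∨ i = j + 1 :=
    f.map_adj_iff.trans C5_adj
  rcases hk with rfl | rfl
  · exact nonempty_K1plus2K2_embedding (d := n 0) (a := n 3) (p := f 3) (b := n 4) (q := f 1)
      (hn 3) (hall 4) (hnn _ _) (by rw [hN]; decide) (hnn _ _) (by rw [hN]; decide) (hnn _ _)
      (by rw [hN]; decide) (by rw [G.adj_comm, hN]; decide) (by rw [hC]; decide)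
  · exact nonempty_K1plus2K2_embedding (d := n 0) (a := n 2) (p := f 2) (b := n 1) (q := f 4)
      (hn 2) (hall 1) (hnn _ _) (by rw [hN]; decide) (hnn _ _) (by rw [hN]; decide) (hnn _ _)
      (by rw [hN]; decide) (by rw [G.adj_comm, hN]; decide) (by rw [hC]; decide)

end InducedC5

end

theorem induced_C5_meets_maxIndep_general {V : Type*} (G : SimpleGraph V) (I : Set V)
    (hK3 : G.CliqueFree 3)
    (hK1plus2K2 : ¬ Nonempty (K1plus2K2 ↪g G))
    (hind : IsIndep G I)
    (hmax : ∀ J : Set V, IsIndep G J → I ⊆ J → J = I) :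
    ∀ f : C5 ↪g G, ∃ i : ZMod 5, f i ∈ I := by
  intro f
  by_contra! hfI
  choose n hnI hn using fun i => hind.exists_adj_of_maximal hmax (hfI i)
  have hnn : ∀ i j, ¬ G.Adj (n i) (n j) := fun i j => hind _ (hnI i) _ (hnI j)
  obtain ⟨k, hk, hall⟩ := exists_forall_adj_add f hK3 hK1plus2K2 hn hnn
  exact hK1plus2K2 (nonempty_K1plus2K2_embedding_of_forall_adj_add f hK3 hn hnn hk hall)

/-- Every induced 5-cycle of `G` intersects the maximal independent set `I`. -/
theorem induced_C5_meets_maxIndep {V : Type*} [Fintype V] (G : SimpleGraph V) (I : Set V)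
    (hK3 : G.CliqueFree 3)
    (hK1plus2K2 : ¬ Nonempty (K1plus2K2 ↪g G))
    (hK1plusC5 : ¬ Nonempty (K1plusC5 ↪g G))
    (hind : IsIndep G I)
    (hmax : ∀ J : Set V, IsIndep G J → I ⊆ J → J = I) :
    ∀ f : C5 ↪g G, ∃ i : ZMod 5, f i ∈ I :=
  induced_C5_meets_maxIndep_general G I hK3 hK1plus2K2 hind hmax
end

section
/- Let G be a finite maximal triangle-free graph that does not contain the Petersen graph minus a vertex, H_10 - v, as a (not necessarily induced) subgraph. Then G contains no induced 6-cycle. -/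
/-- The 6-cycle `C₆`. -/
def C6 : SimpleGraph (ZMod 6) :=
  SimpleGraph.fromRel (fun i j => j = i + 1)

/-- The Petersen graph minus a vertex, `H₁₀ - v`: outer 5-cycle 0,1,2,3,4, inner
vertices 5,6,7,8 (the inner vertex adjacent to 4 is removed), with the remaining
pentagram edges and spokes. -/
def H10minusV : SimpleGraph (Fin 9) :=
  SimpleGraph.fromRel (fun i j =>
    (i, j) ∈ ([(0,1), (1,2), (2,3), (3,4), (4,0),
               (5,7), (6,8), (8,5),
               (0,5), (1,6), (2,7), (3,8)] : List (Fin 9 × Fin 9)))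

/-!
In a maximal triangle-free graph, each antipodal pair `e i, e (i + 3)` of an induced 6-cycle `e`
has a common neighbour, a *hub*. Of the hubs at positions `0, 1, 2` (the one at `0` also serves
at `3`) two consecutive ones are non-adjacent, as the graph is triangle-free, hence have a common
neighbour `z`. The six cycle vertices, the two hubs and `z` span a copy of `H₁₀ - v`.
-/

open SimpleGraph

instance : DecidableRel C6.Adj := fun i j =>
  decidable_of_iff' _ (fromRel_adj _ i j)

instance : DecidableRel H10minusV.Adj := fun i j =>
  decidable_of_iff' _ (fromRel_adj _ i j)

def C6.rotate (k : ZMod 6) : C6 ≃g C6 where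
  toEquiv := Equiv.addLeft k
  map_rel_iff' {i j} := by simp [C6, add_assoc]

@[simp] theorem C6.rotate_apply (k i : ZMod 6) : C6.rotate k i = k + i := rfl

namespace SimpleGraph

variable {V : Type*} {G : SimpleGraph V}

theorem CliqueFree.not_adj_of_adj_of_adj_s12 (hG : G.CliqueFree 3) {a b c : V}
    (hab : G.Adj a b) (hac : G.Adj a c) : ¬ G.Adj b c := fun hbc =>
  isIndepSet_neighborSet_of_triangleFree _ hG a hab hac hbc.ne hbc

def IsHub (e : C6 ↪g G) (i : ZMod 6) (w : V) : Prop :=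
  G.Adj (e i) w ∧ G.Adj (e (i + 3)) w

theorem exists_isHub
    (hmax : ∀ x y : V, x ≠ y → ¬ G.Adj x y → ∃ z, G.Adj x z ∧ G.Adj y z)
    (e : C6 ↪g G) (i : ZMod 6) : ∃ w, IsHub e i w :=
  hmax _ _ (e.injective.ne (by revert i; decide)) (e.map_adj_iff.not.2 (by revert i; decide))

namespace IsHub

variable {e : C6 ↪g G} {i : ZMod 6} {u v : V}

theorem add_three (hu : IsHub e i u) : IsHub e (i + 3) u :=
  ⟨hu.2, by rw [add_assoc, (by decide : (3 + 3 : ZMod 6) = 0), add_zero]; exact hu.1⟩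

theorem comp_rotate {k : ZMod 6} (hu : IsHub e (k + i) u) :
    IsHub (e.comp (C6.rotate k).toEmbedding) i u := by
  simpa [IsHub, add_assoc] using hu

theorem ne_apply (hu : IsHub e i u) (j : ZMod 6) : u ≠ e j := by
  rintro rfl
  exact (by decide : ∀ i j : ZMod 6, ¬ (C6.Adj i j ∧ C6.Adj (i + 3) j)) i j
    ⟨e.map_adj_iff.1 hu.1, e.map_adj_iff.1 hu.2⟩

theorem ne (hG : G.CliqueFree 3) (hu : IsHub e i u) (hv : IsHub e (i + 1) v) : u ≠ v := by
  rintro rfl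
  exact hG.not_adj_of_adj_of_adj_s12 hu.1.symm hv.1.symm
    (e.map_adj_iff.2 ((by decide : ∀ i : ZMod 6, C6.Adj i (i + 1)) i))

end IsHub

theorem H10minusV_isContained_of_isHub_zero_one (hG : G.CliqueFree 3) {e : C6 ↪g G}
    {u v z : V} (hu : IsHub e 0 u) (hv : IsHub e 1 v) (hzu : G.Adj u z) (hzv : G.Adj v z) :
    H10minusV ⊑ G := by
  have hz : ∀ j, z ≠ e j := by
    rintro j rfl
    have hnot {i w} (hw : G.Adj (e i) w) (hwj : G.Adj w (e j)) : ¬ C6.Adj i j :=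
      e.map_adj_iff.not.1 (hG.not_adj_of_adj_of_adj_s12 hw.symm hwj)
    exact (by decide : ∀ j : ZMod 6, ¬ C6.Adj 0 j → ¬ C6.Adj 3 j → ¬ C6.Adj 1 j →
      ¬ C6.Adj 4 j → False) j (hnot hu.1 hzu) (hnot hu.2 hzu) (hnot hv.1 hzv) (hnot hv.2 hzv)
  have hu0 : G.Adj (e 0) u := hu.1
  have hu3 : G.Adj (e 3) u := hu.2
  have hv1 : G.Adj (e 1) v := hv.1
  have hv4 : G.Adj (e 4) v := hv.2
  have huv := hu.ne hG hv
  have hzu' := G.ne_of_adj hzu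
  have hzv' := G.ne_of_adj hzv
  -- The outer 5-cycle of `H₁₀ - v` is `e 0, e 1, v, e 4, e 5`.
  refine ⟨⟨⟨![e 0, e 1, v, e 4, e 5, u, e 2, z, e 3], ?_⟩, ?_⟩⟩
  · intro a b hab
    fin_cases a <;> fin_cases b <;>
      first
        | exact absurd hab (by decide)
        | exact e.map_adj_iff.2 (by decide)
        | assumption
        | exact Adj.symm ‹_›
  · intro a b hab
    fin_cases a <;> fin_cases b <;>
      simp +decide [e.injective.eq_iff, hu.ne_apply, hv.ne_apply, hz, eq_comm (a := e _),
        eq_comm (a := z), huv, huv.symm, hzu', hzv'] at hab ⊢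

theorem H10minusV_isContained_of_isHub (hG : G.CliqueFree 3) {e : C6 ↪g G} {k : ZMod 6}
    {u v z : V} (hu : IsHub e k u) (hv : IsHub e (k + 1) v) (hzu : G.Adj u z)
    (hzv : G.Adj v z) : H10minusV ⊑ G :=
  H10minusV_isContained_of_isHub_zero_one hG (IsHub.comp_rotate (by rwa [add_zero]))
    hv.comp_rotate hzu hzv

end SimpleGraph

theorem maximalTF_H10v_free_no_C6_general {V : Type*} (G : SimpleGraph V)
    (hK3 : G.CliqueFree 3)
    (hmaxtf : ∀ x y : V, x ≠ y → ¬ G.Adj x y → ∃ z, G.Adj x z ∧ G.Adj y z)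
    (hH10 : ¬ ∃ f : Fin 9 ↪ V, ∀ a b : Fin 9, H10minusV.Adj a b → G.Adj (f a) (f b)) :
    ¬ Nonempty (C6 ↪g G) := by
  rintro ⟨e⟩
  obtain ⟨w₀, h₀⟩ := exists_isHub hmaxtf e 0
  obtain ⟨w₁, h₁⟩ := exists_isHub hmaxtf e 1
  obtain ⟨w₂, h₂⟩ := exists_isHub hmaxtf e 2
  obtain ⟨k, u, v, hu, hv, huv⟩ : ∃ k u v, IsHub e k u ∧ IsHub e (k + 1) v ∧ ¬ G.Adj u v := by
    by_cases h₀₁ : G.Adj w₀ w₁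
    · by_cases h₁₂ : G.Adj w₁ w₂
      · exact ⟨2, w₂, w₀, h₂, h₀.add_three, hK3.not_adj_of_adj_of_adj_s12 h₁₂ h₀₁.symm⟩
      · exact ⟨1, w₁, w₂, h₁, h₂, h₁₂⟩
    · exact ⟨0, w₀, w₁, h₀, by rwa [zero_add], h₀₁⟩
  obtain ⟨z, hzu, hzv⟩ := hmaxtf u v (hu.ne hK3 hv) huv
  obtain ⟨f⟩ := H10minusV_isContained_of_isHub hK3 hu hv hzu hzv
  exact hH10 ⟨f.toEmbedding, fun a b hab => f.toHom.map_adj hab⟩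

/-- A finite maximal triangle-free graph containing no `H₁₀ - v` as a (not necessarily
induced) subgraph contains no induced 6-cycle. -/
theorem maximalTF_H10v_free_no_C6 {V : Type*} [Fintype V] (G : SimpleGraph V)
    (hK3 : G.CliqueFree 3)
    (hmaxtf : ∀ x y : V, x ≠ y → ¬ G.Adj x y → ∃ z, G.Adj x z ∧ G.Adj y z)
    (hH10 : ¬ ∃ f : Fin 9 ↪ V, ∀ a b : Fin 9, H10minusV.Adj a b → G.Adj (f a) (f b)) :
    ¬ Nonempty (C6 ↪g G) :=
  maximalTF_H10v_free_no_C6_general G hK3 hmaxtf hH10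
end
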